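/- For every θ ∈ [0, π]: if r ∈ ℛ⁻ with r > 0, then (4cos²θ)^r ≤ 2^{2r}·a₀⁺ + Σ_{j=1}^{4} 2^{2(r−j)}·a_j⁺·(2cos θ)^{2j}; and if r ∈ ℛ⁺, then (4cos²θ)^r ≥ 2^{2r}·a₀⁺ + Σ_{j=1}^{4} 2^{2(r−j)}·a_j⁺·(2cos θ)^{2j}. -/

import Mathlib

noncomputable section

open Real Filter

def P1p (r κ η : ℝ) : ℝ :=
  r * κ ^ (r - 1) * η * (κ - 1) * (η - κ) * (κ * η + 2 * κ + η) * (η - 1) ^ 2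
    + 2 * (κ ^ r - 1) * κ * η * (η - 1) ^ 2 * (2 * κ * η + 4 * κ - η ^ 2 - 2 * η - 3)

def P2p (r κ η : ℝ) : ℝ :=
  r * κ ^ (r - 1) * (κ - 1) * (κ - η) * (η - 1) ^ 2 * (2 * κ * η + κ + η ^ 2 + 2 * η)
    + (η ^ r - 1) * (κ - 1) ^ 2 *
      (8 * κ * η ^ 2 + 4 * η ^ 2 - η * κ ^ 2 - 2 * κ * η - 3 * η - κ ^ 3 - 2 * κ ^ 2 - 3 * κ)

def P3p (r κ η : ℝ) : ℝ :=
  r * κ ^ (r - 1) * (κ - 1) * (κ + 2 * η + 1) * (η - κ) * (η - 1) ^ 2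
    + 2 * (κ ^ r - 1) * (2 * κ ^ 2 + 2 * κ * η - η ^ 2 - 2 * η - 1) * (η - 1) ^ 2

def P4p (r κ η : ℝ) : ℝ :=
  r * κ ^ (r - 1) * (κ - 1) * (κ - η) * (η - 1) ^ 2
    + (η ^ r - 1) * (κ - 1) ^ 2 * (3 * η - κ - 2)

/-- `κ₊ = (6 − √21)/20`. -/
def κp : ℝ := (6 - Real.sqrt 21) / 20

/-- `η₊ = (6 + √21)/20`. -/
def ηp : ℝ := (6 + Real.sqrt 21) / 20

def a1p (r : ℝ) : ℝ :=
  (P1p r κp ηp - P1p r ηp κp) / ((κp - 1) ^ 2 * (ηp - 1) ^ 2 * (κp - ηp) ^ 3)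

def a2p (r : ℝ) : ℝ :=
  (P2p r κp ηp - P2p r ηp κp) / ((κp - 1) ^ 2 * (ηp - 1) ^ 2 * (κp - ηp) ^ 3)

def a3p (r : ℝ) : ℝ :=
  (P3p r κp ηp - P3p r ηp κp) / ((κp - 1) ^ 2 * (ηp - 1) ^ 2 * (κp - ηp) ^ 3)

def a4p (r : ℝ) : ℝ :=
  (P4p r κp ηp - P4p r ηp κp) / ((κp - 1) ^ 2 * (ηp - 1) ^ 2 * (κp - ηp) ^ 3)

/-- `a₀⁺ = 1 − a₁⁺ − a₂⁺ − a₃⁺ − a₄⁺`. -/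
def a0p (r : ℝ) : ℝ := 1 - a1p r - a2p r - a3p r - a4p r

/-- `ℛ⁻ = (0,1] ∪ [2,3] ∪ [4,∞)`. -/
def Rminus : Set ℝ := Set.Ioc 0 1 ∪ Set.Icc 2 3 ∪ Set.Ici 4

/-- `ℛ⁺ = [1,2] ∪ [3,4]`. -/
def Rplus : Set ℝ := Set.Icc 1 2 ∪ Set.Icc 3 4

/-! With `u = cos²θ ∈ [0, 1]` both sides are `4 ^ r` times `u ^ r`, resp. `Q(u)`, where `Q` is the
quartic Hermite interpolant of `x ↦ x ^ r` matching value and slope at `κ₊` and `η₊` and the value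
at `1`; the `a_j⁺` are its coefficients. Applying Rolle's theorem five times to
`x ^ r - Q(x) - c (x - κ)² (x - η)² (x - 1)`, with `c` chosen to make it vanish at `u` as well,
gives the error formula
`u ^ r - Q(u) = r (r - 1) (r - 2) (r - 3) (r - 4) ξ ^ (r - 5) / 5! · (u - κ)² (u - η)² (u - 1)`
for some `ξ ∈ (0, 1)`. As `u ≤ 1`, the error has the sign opposite to `r (r - 1) ⋯ (r - 4)`,
which is `≥ 0` on `ℛ⁻` and `≤ 0` on `ℛ⁺`. -/

open Set Polynomial

theorem exists_finset_deriv_zeros {f f' : ℝ → ℝ} {D : Set ℝ} (hD : D.OrdConnected)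
    (hf : ContinuousOn f D) (hf' : ∀ x ∈ interior D, HasDerivAt f (f' x) x) (s : Finset ℝ)
    (hsD : ↑s ⊆ D) (hs : ∀ x ∈ s, f x = 0) :
    ∃ t : Finset ℝ, s.card ≤ t.card + 1 ∧ ↑t ⊆ interior D ∧ Disjoint s t ∧
      ∀ x ∈ t, f' x = 0 := by
  classical
  induction s using Finset.induction_on_max generalizing D with
  | empty => exact ⟨∅, by simp⟩
  | insert b s hlt ih =>
    rcases s.eq_empty_or_nonempty with rfl | hne
    · exact ⟨∅, by simp⟩
    set a := s.max' hne
    have haS : a ∈ insert b s := Finset.mem_insert_of_mem (s.max'_mem hne)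
    have hbS : b ∈ insert b s := Finset.mem_insert_self b s
    have hab : a < b := hlt a (s.max'_mem hne)
    have hIcc : Icc a b ⊆ D := hD.out (hsD haS) (hsD hbS)
    obtain ⟨t, hcard, htD, hdisj, ht⟩ := ih (D := D ∩ Iic a) (hD.inter ordConnected_Iic)
      (hf.mono inter_subset_left) (fun x hx => hf' x (interior_mono inter_subset_left hx))
      (fun x hx => ⟨hsD (Finset.mem_insert_of_mem hx), s.le_max' x hx⟩)
      (fun x hx => hs x (Finset.mem_insert_of_mem hx))
    obtain ⟨c, hc, hfc⟩ := exists_hasDerivAt_eq_zero hab (hf.mono hIcc) (by rw [hs a haS, hs b hbS])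
      (fun x hx => hf' x (interior_mono hIcc (by rwa [interior_Icc])))
    rw [interior_inter, interior_Iic] at htD
    have hct : c ∉ t := fun h => (htD h).2.not_ge hc.1.le
    refine ⟨insert c t, ?_, ?_, ?_, ?_⟩
    · rw [Finset.card_insert_of_notMem hct, Finset.card_insert_of_notMem (fun h => (hlt b h).false)]
      omega
    · rw [Finset.coe_insert]
      exact insert_subset (interior_mono hIcc (by rwa [interior_Icc]))
        (htD.trans inter_subset_left)
    · rw [Finset.disjoint_insert_left, Finset.disjoint_insert_right, Finset.mem_insert, not_or]
      refine ⟨⟨hc.2.ne', fun hbt => ?_⟩, fun hcs => ?_, hdisj⟩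
      · exact (htD hbt).2.not_ge hab.le
      · exact hc.1.not_ge (s.le_max' c hcs)
    · exact Finset.forall_mem_insert _ _ _ |>.2 ⟨hfc, ht⟩

theorem exists_zero_of_hasDerivAt_succ {f : ℕ → ℝ → ℝ} {U : Set ℝ} (hU : IsOpen U)
    (hU' : U.OrdConnected) (hf : ∀ k, ∀ x ∈ U, HasDerivAt (f k) (f (k + 1) x) x) (n : ℕ)
    (s : Finset ℝ) (hsU : ↑s ⊆ U) (hs : n + 1 ≤ s.card) (hzero : ∀ x ∈ s, f 0 x = 0) :
    ∃ x ∈ U, f n x = 0 := by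
  induction n generalizing f s with
  | zero =>
    obtain ⟨x, hx⟩ := Finset.card_pos.1 hs
    exact ⟨x, hsU hx, hzero x hx⟩
  | succ n ih =>
    obtain ⟨t, hcard, htU, -, ht⟩ := exists_finset_deriv_zeros hU'
      (fun x hx => (hf 0 x hx).continuousAt.continuousWithinAt)
      (fun x hx => hf 0 x (interior_subset hx)) s hsU hzero
    rw [hU.interior_eq] at htU
    exact ih (f := fun k => f (k + 1)) (fun k => hf (k + 1)) t htU (by omega) ht

theorem Polynomial.iterate_derivative_eq_C_of_natDegree_le {R : Type*} [CommSemiring R]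
    {p : R[X]} {n : ℕ} (hp : p.natDegree ≤ n) :
    derivative^[n] p = C (n.factorial * p.coeff n) := by
  ext m
  rw [coeff_iterate_derivative, coeff_C]
  rcases m.eq_zero_or_pos with rfl | hm
  · simp [Nat.descFactorial_self]
  · rw [coeff_eq_zero_of_natDegree_lt (by omega), if_neg hm.ne', smul_zero]

def iteratedDerivRpowSub (r : ℝ) (P : ℝ[X]) (k : ℕ) (x : ℝ) : ℝ :=
  (descPochhammer ℝ k).eval r * x ^ (r - k) - (derivative^[k] P).eval x

theorem hasDerivAt_iteratedDerivRpowSub (r : ℝ) (P : ℝ[X]) (k : ℕ) {x : ℝ} (hx : x ≠ 0) :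
    HasDerivAt (iteratedDerivRpowSub r P k) (iteratedDerivRpowSub r P (k + 1) x) x := by
  have h := ((Real.hasDerivAt_rpow_const (p := r - k) (Or.inl hx)).const_mul
    ((descPochhammer ℝ k).eval r)).sub ((derivative^[k] P).hasDerivAt x)
  refine HasDerivAt.congr_deriv (f := iteratedDerivRpowSub r P k) h ?_
  simp only [iteratedDerivRpowSub, descPochhammer_succ_eval, Function.iterate_succ_apply']
  push_cast
  ring_nf

theorem exists_descPochhammer_mul_rpow_eq_coeff {r κ η u : ℝ} {P : ℝ[X]} (hr : 0 ≤ r)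
    (hκ : 0 < κ) (hκη : κ < η) (hη : η < 1) (hu : u ∈ Icc 0 1) (huκ : u ≠ κ) (huη : u ≠ η)
    (hu1 : u ≠ 1) (hP : P.natDegree ≤ 5) (hPκ : P.eval κ = κ ^ r) (hPη : P.eval η = η ^ r)
    (hP1 : P.eval 1 = 1) (hPu : P.eval u = u ^ r)
    (hP'κ : (derivative P).eval κ = r * κ ^ (r - 1))
    (hP'η : (derivative P).eval η = r * η ^ (r - 1)) :
    ∃ ξ ∈ Ioo 0 1, (descPochhammer ℝ 5).eval r * ξ ^ (r - 5) = 120 * P.coeff 5 := by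
  set f := iteratedDerivRpowSub r P
  have hf0 : ∀ x, f 0 x = x ^ r - P.eval x := by simp [f, iteratedDerivRpowSub]
  have hf1 : ∀ x, f 1 x = r * x ^ (r - 1) - (derivative P).eval x := by
    simp [f, iteratedDerivRpowSub]
  have hcont : ContinuousOn (f 0) (Icc 0 1) := by
    simp only [funext hf0]
    exact (continuousOn_id.rpow_const fun _ _ => Or.inr hr).sub P.continuousOn
  have hκI : κ ∈ Ioo 0 1 := ⟨hκ, hκη.trans hη⟩
  have hηI : η ∈ Ioo 0 1 := ⟨hκ.trans hκη, hη⟩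
  obtain ⟨t, htcard, htI, hdisj, ht⟩ := exists_finset_deriv_zeros ordConnected_Icc
    hcont (fun x hx => hasDerivAt_iteratedDerivRpowSub r P 0
      (by rw [interior_Icc] at hx; exact hx.1.ne')) {u, κ, η, 1}
    (by simp [insert_subset_iff, hu, Ioo_subset_Icc_self hκI, Ioo_subset_Icc_self hηI])
    (by simp [hf0, hPu, hPκ, hPη, hP1])
  rw [interior_Icc] at htI
  -- κ and η are also zeros of `f 1`, distinct from the Rolle points in `t`.
  have hκt : κ ∉ t := Finset.disjoint_left.1 hdisj (by simp)
  have hηt : η ∉ t := Finset.disjoint_left.1 hdisj (by simp)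
  have hcard : 4 + 1 ≤ (insert κ (insert η t)).card := by
    have hs : ({u, κ, η, 1} : Finset ℝ).card = 4 := by
      simp [huκ, huη, hu1, hκη.ne, (hκη.trans hη).ne, hη.ne]
    rw [Finset.card_insert_of_notMem (by simp [hκη.ne, hκt]), Finset.card_insert_of_notMem hηt]
    omega
  have hzero : ∀ x ∈ insert κ (insert η t), f 1 x = 0 := by
    simp only [Finset.forall_mem_insert, hf1, hP'κ, hP'η, sub_self, true_and]
    exact fun x hx => (hf1 x).symm.trans (ht x hx)
  obtain ⟨ξ, hξ, hfξ⟩ := exists_zero_of_hasDerivAt_succ (f := fun k => f (k + 1))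
    (U := Ioo 0 1) isOpen_Ioo ordConnected_Ioo
    (fun k x hx => hasDerivAt_iteratedDerivRpowSub r P (k + 1) hx.1.ne') 4
    (insert κ (insert η t)) (by simp [insert_subset_iff, hκI, hηI, htI]) hcard hzero
  refine ⟨ξ, hξ, ?_⟩
  simp only [f, iteratedDerivRpowSub, iterate_derivative_eq_C_of_natDegree_le hP, eval_C,
    Nat.factorial] at hfξ
  norm_num at hfξ
  linarith

def hermiteDenom (κ η : ℝ) : ℝ := (κ - 1) ^ 2 * (η - 1) ^ 2 * (κ - η) ^ 3

def hermiteCoeff1 (r κ η : ℝ) : ℝ := (P1p r κ η - P1p r η κ) / hermiteDenom κ η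
def hermiteCoeff2 (r κ η : ℝ) : ℝ := (P2p r κ η - P2p r η κ) / hermiteDenom κ η
def hermiteCoeff3 (r κ η : ℝ) : ℝ := (P3p r κ η - P3p r η κ) / hermiteDenom κ η
def hermiteCoeff4 (r κ η : ℝ) : ℝ := (P4p r κ η - P4p r η κ) / hermiteDenom κ η

def hermiteQuartic (r κ η : ℝ) : ℝ[X] :=
  C (1 - hermiteCoeff1 r κ η - hermiteCoeff2 r κ η - hermiteCoeff3 r κ η - hermiteCoeff4 r κ η)
    + C (hermiteCoeff1 r κ η) * X + C (hermiteCoeff2 r κ η) * X ^ 2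
    + C (hermiteCoeff3 r κ η) * X ^ 3 + C (hermiteCoeff4 r κ η) * X ^ 4

theorem hermiteDenom_comm (κ η : ℝ) : hermiteDenom η κ = -hermiteDenom κ η := by
  unfold hermiteDenom; ring

theorem hermiteQuartic_comm (r κ η : ℝ) : hermiteQuartic r η κ = hermiteQuartic r κ η := by
  simp only [hermiteQuartic, hermiteCoeff1, hermiteCoeff2, hermiteCoeff3, hermiteCoeff4,
    hermiteDenom_comm η κ, div_neg, ← neg_div, neg_sub]

theorem eval_one_hermiteQuartic (r κ η : ℝ) : (hermiteQuartic r κ η).eval 1 = 1 := by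
  simp only [hermiteQuartic, eval_add, eval_mul, eval_C, eval_X, eval_pow]; ring

theorem natDegree_hermiteQuartic_le (r κ η : ℝ) : (hermiteQuartic r κ η).natDegree ≤ 4 := by
  unfold hermiteQuartic; compute_degree

theorem hermiteDenom_ne_zero {κ η : ℝ} (hκ : κ ≠ 1) (hη : η ≠ 1) (hκη : κ ≠ η) :
    hermiteDenom κ η ≠ 0 := by
  unfold hermiteDenom; simp [sub_ne_zero, hκ, hη, hκη]

theorem eval_hermiteQuartic_left (r : ℝ) {κ η : ℝ} (hκ : κ ≠ 1) (hη : η ≠ 1) (hκη : κ ≠ η) :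
    (hermiteQuartic r κ η).eval κ = κ ^ r := by
  have := hermiteDenom_ne_zero hκ hη hκη
  simp only [hermiteQuartic, eval_add, eval_mul, eval_C, eval_X, eval_pow, hermiteCoeff1,
    hermiteCoeff2, hermiteCoeff3, hermiteCoeff4]
  field_simp
  unfold hermiteDenom P1p P2p P3p P4p
  ring

theorem eval_derivative_hermiteQuartic_left (r : ℝ) {κ η : ℝ} (hκ : κ ≠ 1) (hη : η ≠ 1)
    (hκη : κ ≠ η) : (derivative (hermiteQuartic r κ η)).eval κ = r * κ ^ (r - 1) := by
  have := hermiteDenom_ne_zero hκ hη hκη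
  simp only [hermiteQuartic, derivative_add, derivative_mul, derivative_C, derivative_X,
    derivative_X_pow, eval_add, eval_one, eval_zero, eval_mul, eval_C, eval_X, eval_pow,
    hermiteCoeff1, hermiteCoeff2, hermiteCoeff3, hermiteCoeff4]
  field_simp
  unfold hermiteDenom P1p P2p P3p P4p
  ring

theorem exists_rpow_sub_eval_hermiteQuartic_eq {r κ η u : ℝ} (hr : 0 ≤ r) (hκ : 0 < κ)
    (hκη : κ < η) (hη : η < 1) (hu : u ∈ Icc 0 1) :
    ∃ ξ ∈ Ioo 0 1, u ^ r - (hermiteQuartic r κ η).eval u =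
      (descPochhammer ℝ 5).eval r * ξ ^ (r - 5) / 120 * ((u - κ) ^ 2 * (u - η) ^ 2 * (u - 1)) := by
  have hκ1 : κ ≠ 1 := (hκη.trans hη).ne
  have hQκ := eval_hermiteQuartic_left r hκ1 hη.ne hκη.ne
  have hQη := hermiteQuartic_comm r κ η ▸ eval_hermiteQuartic_left r hη.ne hκ1 hκη.ne'
  have hQ'κ := eval_derivative_hermiteQuartic_left r hκ1 hη.ne hκη.ne
  have hQ'η := hermiteQuartic_comm r κ η ▸ eval_derivative_hermiteQuartic_left r hη.ne hκ1 hκη.ne'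
  have hQ1 := eval_one_hermiteQuartic r κ η
  have hQ5 : (hermiteQuartic r κ η).coeff 5 = 0 :=
    coeff_eq_zero_of_natDegree_lt ((natDegree_hermiteQuartic_le r κ η).trans_lt (by norm_num))
  set Q := hermiteQuartic r κ η
  by_cases hu' : u = κ ∨ u = η ∨ u = 1
  · refine ⟨1 / 2, by norm_num, ?_⟩
    rcases hu' with rfl | rfl | rfl <;> simp [hQκ, hQη, hQ1]
  push Not at hu'
  obtain ⟨huκ, huη, hu1⟩ := hu'
  set W : ℝ[X] := (X - C κ) ^ 2 * (X - C η) ^ 2 * (X - 1) with hWdef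
  have hWu : W.eval u = (u - κ) ^ 2 * (u - η) ^ 2 * (u - 1) := by simp [W]
  have hWu0 : W.eval u ≠ 0 := by
    rw [hWu]; simp [sub_ne_zero, huκ, huη, hu1]
  have hW : W.natDegree = 5 := by rw [hWdef]; compute_degree!
  have hW5 : W.coeff 5 = 1 := by
    have hmonic : W.Monic := by rw [hWdef]; monicity!
    rw [← hW]; exact hmonic.coeff_natDegree
  -- `Q + c W` interpolates `x ^ r` at `u` as well.
  set c := (u ^ r - Q.eval u) / W.eval u
  obtain ⟨ξ, hξ, hξc⟩ := exists_descPochhammer_mul_rpow_eq_coeff (P := Q + C c * W) hr hκ hκη hη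
    hu huκ huη hu1
    (natDegree_add_le_of_degree_le ((natDegree_hermiteQuartic_le r κ η).trans (by norm_num))
      ((natDegree_C_mul_le c W).trans hW.le))
    (by simp [W, hQκ]) (by simp [W, hQη]) (by simp [W, hQ1])
    (by rw [eval_add, eval_mul, eval_C, div_mul_cancel₀ _ hWu0]; ring)
    (by simp [W, derivative_pow, hQ'κ]) (by simp [W, derivative_pow, hQ'η])
  refine ⟨ξ, hξ, ?_⟩
  rw [hξc, ← hWu, coeff_add, coeff_C_mul, hQ5, hW5, zero_add, mul_one,
    mul_div_cancel_left₀ _ (by norm_num : (120 : ℝ) ≠ 0), div_mul_cancel₀ _ hWu0]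

theorem rpow_le_eval_hermiteQuartic {r κ η u : ℝ} (hr : 0 ≤ r) (hκ : 0 < κ) (hκη : κ < η)
    (hη : η < 1) (hu : u ∈ Icc 0 1) (h5 : 0 ≤ (descPochhammer ℝ 5).eval r) :
    u ^ r ≤ (hermiteQuartic r κ η).eval u := by
  obtain ⟨ξ, hξ, h⟩ := exists_rpow_sub_eval_hermiteQuartic_eq hr hκ hκη hη hu
  have hW : (u - κ) ^ 2 * (u - η) ^ 2 * (u - 1) ≤ 0 :=
    mul_nonpos_of_nonneg_of_nonpos (by positivity) (by linarith [hu.2])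
  have := mul_nonpos_of_nonneg_of_nonpos
    (div_nonneg (mul_nonneg h5 (rpow_nonneg hξ.1.le (r - 5))) (by norm_num : (0 : ℝ) ≤ 120)) hW
  linarith

theorem eval_hermiteQuartic_le_rpow {r κ η u : ℝ} (hr : 0 ≤ r) (hκ : 0 < κ) (hκη : κ < η)
    (hη : η < 1) (hu : u ∈ Icc 0 1) (h5 : (descPochhammer ℝ 5).eval r ≤ 0) :
    (hermiteQuartic r κ η).eval u ≤ u ^ r := by
  obtain ⟨ξ, hξ, h⟩ := exists_rpow_sub_eval_hermiteQuartic_eq hr hκ hκη hη hu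
  have hW : (u - κ) ^ 2 * (u - η) ^ 2 * (u - 1) ≤ 0 :=
    mul_nonpos_of_nonneg_of_nonpos (by positivity) (by linarith [hu.2])
  have := mul_nonneg_of_nonpos_of_nonpos
    (div_nonpos_of_nonpos_of_nonneg
      (mul_nonpos_of_nonpos_of_nonneg h5 (rpow_nonneg hξ.1.le (r - 5)))
      (by norm_num : (0 : ℝ) ≤ 120)) hW
  linarith

theorem descPochhammer_eval_five (r : ℝ) :
    (descPochhammer ℝ 5).eval r = r * (r - 1) * (r - 2) * (r - 3) * (r - 4) := by
  simp [descPochhammer_succ_eval]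

theorem descPochhammer_eval_five_nonneg {r : ℝ} (hr : r ∈ Rminus) :
    0 ≤ (descPochhammer ℝ 5).eval r := by
  rw [descPochhammer_eval_five]
  rcases hr with (⟨h0, h1⟩ | ⟨h2, h3⟩) | (h4 : 4 ≤ r)
  · have : 0 ≤ r * (1 - r) * (2 - r) * (3 - r) * (4 - r) := by
      apply_rules [mul_nonneg] <;> linarith
    linarith
  · have : 0 ≤ r * (r - 1) * (r - 2) * (3 - r) * (4 - r) := by
      apply_rules [mul_nonneg] <;> linarith
    linarith
  · apply_rules [mul_nonneg] <;> linarith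

theorem descPochhammer_eval_five_nonpos {r : ℝ} (hr : r ∈ Rplus) :
    (descPochhammer ℝ 5).eval r ≤ 0 := by
  rw [descPochhammer_eval_five]
  rcases hr with ⟨h1, h2⟩ | ⟨h3, h4⟩
  · have : 0 ≤ r * (r - 1) * (2 - r) * (3 - r) * (4 - r) := by
      apply_rules [mul_nonneg] <;> linarith
    linarith
  · have : 0 ≤ r * (r - 1) * (r - 2) * (r - 3) * (4 - r) := by
      apply_rules [mul_nonneg] <;> linarith
    linarith

theorem two_rpow_mul_add_eq_four_rpow_mul (r x a₀ a₁ a₂ a₃ a₄ : ℝ) :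
    (2 : ℝ) ^ (2 * r) * a₀ + (2 : ℝ) ^ (2 * (r - 1)) * a₁ * (2 * x) ^ 2
        + (2 : ℝ) ^ (2 * (r - 2)) * a₂ * (2 * x) ^ 4 + (2 : ℝ) ^ (2 * (r - 3)) * a₃ * (2 * x) ^ 6
        + (2 : ℝ) ^ (2 * (r - 4)) * a₄ * (2 * x) ^ 8
      = (4 : ℝ) ^ r *
          (a₀ + a₁ * x ^ 2 + a₂ * (x ^ 2) ^ 2 + a₃ * (x ^ 2) ^ 3 + a₄ * (x ^ 2) ^ 4) := by
  have h : ∀ j : ℕ, (2 : ℝ) ^ (2 * (r - j)) * 4 ^ j = 4 ^ r := fun j => by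
    rw [rpow_mul zero_le_two, rpow_two, rpow_sub_natCast (by norm_num)]
    norm_num
  have h0 := h 0
  have h1 := h 1
  have h2 := h 2
  have h3 := h 3
  have h4 := h 4
  norm_num at h0 h1 h2 h3 h4
  linear_combination a₀ * h0 + a₁ * x ^ 2 * h1 + a₂ * x ^ 4 * h2 + a₃ * x ^ 6 * h3 + a₄ * x ^ 8 * h4

theorem eval_hermiteQuartic_κp_ηp (r x : ℝ) :
    (hermiteQuartic r κp ηp).eval x
      = a0p r + a1p r * x + a2p r * x ^ 2 + a3p r * x ^ 3 + a4p r * x ^ 4 := by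
  simp only [hermiteQuartic, eval_add, eval_mul, eval_C, eval_X, eval_pow]
  rfl

theorem κp_pos : 0 < κp := by
  have : √21 < 6 := by rw [sqrt_lt' (by norm_num)]; norm_num
  unfold κp; linarith

theorem κp_lt_ηp : κp < ηp := by
  have : 0 < √21 := by positivity
  unfold κp ηp; linarith

theorem ηp_lt_one : ηp < 1 := by
  have : √21 < 14 := by rw [sqrt_lt' (by norm_num)]; norm_num
  unfold ηp; linarith

theorem pointwise_comparison_plus_general (θ r : ℝ) :
    (r ∈ Rminus → 0 < r →
      (4 * Real.cos θ ^ 2) ^ r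
        ≤ (2 : ℝ) ^ (2 * r) * a0p r
            + (2 : ℝ) ^ (2 * (r - 1)) * a1p r * (2 * Real.cos θ) ^ 2
            + (2 : ℝ) ^ (2 * (r - 2)) * a2p r * (2 * Real.cos θ) ^ 4
            + (2 : ℝ) ^ (2 * (r - 3)) * a3p r * (2 * Real.cos θ) ^ 6
            + (2 : ℝ) ^ (2 * (r - 4)) * a4p r * (2 * Real.cos θ) ^ 8) ∧
    (r ∈ Rplus →
      (2 : ℝ) ^ (2 * r) * a0p r
          + (2 : ℝ) ^ (2 * (r - 1)) * a1p r * (2 * Real.cos θ) ^ 2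
          + (2 : ℝ) ^ (2 * (r - 2)) * a2p r * (2 * Real.cos θ) ^ 4
          + (2 : ℝ) ^ (2 * (r - 3)) * a3p r * (2 * Real.cos θ) ^ 6
          + (2 : ℝ) ^ (2 * (r - 4)) * a4p r * (2 * Real.cos θ) ^ 8
        ≤ (4 * Real.cos θ ^ 2) ^ r) := by
  have hu : cos θ ^ 2 ∈ Icc 0 1 := ⟨sq_nonneg _, cos_sq_le_one θ⟩
  rw [two_rpow_mul_add_eq_four_rpow_mul, mul_rpow zero_le_four hu.1,
    ← eval_hermiteQuartic_κp_ηp]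
  refine ⟨fun hr hr0 => ?_, fun hr => ?_⟩
  · gcongr
    exact rpow_le_eval_hermiteQuartic hr0.le κp_pos κp_lt_ηp ηp_lt_one hu
      (descPochhammer_eval_five_nonneg hr)
  · gcongr
    have hr1 : 1 ≤ r := by rcases hr with ⟨h, -⟩ | ⟨h, -⟩ <;> linarith
    exact eval_hermiteQuartic_le_rpow (by linarith) κp_pos κp_lt_ηp ηp_lt_one hu
      (descPochhammer_eval_five_nonpos hr)

/-- Pointwise comparison in Rankin's method: for `θ ∈ [0, π]`,
`(4cos²θ)^r` is at most `2^{2r}·a₀⁺ + Σ_{j=1}^{4} 2^{2(r−j)}·a_j⁺·(2cos θ)^{2j}`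
when `r ∈ ℛ⁻` and at least that quantity when `r ∈ ℛ⁺`. -/
theorem pointwise_comparison_plus (θ r : ℝ) (hθ : θ ∈ Set.Icc 0 π) :
    (r ∈ Rminus → 0 < r →
      (4 * Real.cos θ ^ 2) ^ r
        ≤ (2 : ℝ) ^ (2 * r) * a0p r
            + (2 : ℝ) ^ (2 * (r - 1)) * a1p r * (2 * Real.cos θ) ^ 2
            + (2 : ℝ) ^ (2 * (r - 2)) * a2p r * (2 * Real.cos θ) ^ 4
            + (2 : ℝ) ^ (2 * (r - 3)) * a3p r * (2 * Real.cos θ) ^ 6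
            + (2 : ℝ) ^ (2 * (r - 4)) * a4p r * (2 * Real.cos θ) ^ 8) ∧
    (r ∈ Rplus →
      (2 : ℝ) ^ (2 * r) * a0p r
          + (2 : ℝ) ^ (2 * (r - 1)) * a1p r * (2 * Real.cos θ) ^ 2
          + (2 : ℝ) ^ (2 * (r - 2)) * a2p r * (2 * Real.cos θ) ^ 4
          + (2 : ℝ) ^ (2 * (r - 3)) * a3p r * (2 * Real.cos θ) ^ 6
          + (2 : ℝ) ^ (2 * (r - 4)) * a4p r * (2 * Real.cos θ) ^ 8
        ≤ (4 * Real.cos θ ^ 2) ^ r) :=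
  pointwise_comparison_plus_general θ r
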